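/- arXiv:2501.09941 — 3 statements merged into one kernel-verified Lean document; each statement's English description precedes it below -/
import Mathlib

section
/- Every subset of Z/7Z of cardinality 4 is affine equivalent to either {0,1,2,3} or {0,1,2,4}. -/
/-! Affine maps `a ↦ s * a + t` act transitively on pairs of distinct points of a field, so every
set with at least two elements is affine equivalent to one containing `0` and `1`. In `ZMod 7`
only ten sets of size four contain `0` and `1`, and each of them is checked by evaluation to be
equivalent to `{0, 1, 2, 3}` or `{0, 1, 2, 4}`. -/

namespace Finset

section Ring

variable {R : Type*} [Ring R] [DecidableEq R]

def AffineEquivalent (S T : Finset R) : Prop :=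
  ∃ s : Rˣ, ∃ t : R, S.image (fun a => (s : R) * a + t) = T

theorem AffineEquivalent.trans {S T U : Finset R} (hST : S.AffineEquivalent T)
    (hTU : T.AffineEquivalent U) : S.AffineEquivalent U := by
  obtain ⟨s, t, rfl⟩ := hST
  obtain ⟨s', t', rfl⟩ := hTU
  refine ⟨s' * s, s' * t + t', ?_⟩
  rw [image_image]
  congr 1
  ext a
  simp only [Function.comp_apply, Units.val_mul, mul_add, mul_assoc, add_assoc]

theorem AffineEquivalent.card_eq {S T : Finset R} (h : S.AffineEquivalent T) :
    T.card = S.card := by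
  obtain ⟨s, t, rfl⟩ := h
  refine card_image_of_injective S fun a b hab => ?_
  simpa using hab

end Ring

theorem exists_affineEquivalent_zero_one_mem {K : Type*} [Field K] [DecidableEq K]
    {S : Finset K} (hS : 1 < S.card) : ∃ T : Finset K, S.AffineEquivalent T ∧ 0 ∈ T ∧ 1 ∈ T := by
  obtain ⟨a, ha, b, hb, hab⟩ := one_lt_card.mp hS
  have hba : b - a ≠ 0 := sub_ne_zero.mpr (Ne.symm hab)
  refine ⟨_, ⟨(Units.mk0 _ hba)⁻¹, -a / (b - a), rfl⟩, mem_image.mpr ⟨a, ha, ?_⟩,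
    mem_image.mpr ⟨b, hb, ?_⟩⟩ <;>
  · simp only [Units.val_inv_eq_inv_val, Units.val_mk0]
    field_simp
    ring

end Finset

open Finset

set_option maxRecDepth 10000 in
theorem ZMod.seven_affineEquivalent_of_card_eq_four_of_zero_one_mem (S : Finset (ZMod 7))
    (hS : S.card = 4) (h0 : 0 ∈ S) (h1 : 1 ∈ S) :
    S.AffineEquivalent {0, 1, 2, 3} ∨ S.AffineEquivalent {0, 1, 2, 4} := by
  unfold AffineEquivalent
  revert S
  decide

theorem stmt7 (S : Finset (ZMod 7)) (h : S.card = 4) :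
    (∃ s : (ZMod 7)ˣ, ∃ t : ZMod 7,
      S.image (fun a => (s : ZMod 7) * a + t) = ({0, 1, 2, 3} : Finset (ZMod 7))) ∨
    (∃ s : (ZMod 7)ˣ, ∃ t : ZMod 7,
      S.image (fun a => (s : ZMod 7) * a + t) = ({0, 1, 2, 4} : Finset (ZMod 7))) := by
  have : Fact (Nat.Prime 7) := ⟨by norm_num⟩
  obtain ⟨T, hST, h0, h1⟩ := exists_affineEquivalent_zero_one_mem (S := S) (by omega)
  exact (ZMod.seven_affineEquivalent_of_card_eq_four_of_zero_one_mem T (hST.card_eq.trans h) h0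
    h1).imp hST.trans hST.trans
end

section
/- For every subset S of Z/7Z with at most 3 elements, the R-palette graph G_S contains no connected R-subgraph with at least three vertices. -/
/-- Adjacency in the R-palette graph `G_S` of a subset `S ⊆ ZMod p`. -/
def RAdj (p : ℕ) (S : Set (ZMod p)) (b₁ b₂ : ZMod p) : Prop :=
  b₁ ≠ b₂ ∧ ∃ a₁ ∈ S, ∃ a₂ ∈ S, ∃ a₃ ∈ S, ∃ a₄ ∈ S,
    a₁ + a₂ = b₁ ∧ a₃ + a₄ = b₂ ∧ (a₁ + a₃ = a₂ + a₄ ∨ a₁ + a₄ = a₂ + a₃)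

/-- `(V, E)` is a connected R-subgraph of the R-palette graph `G_S`:
vertices are sums of two elements of `S`, edges are edges of `G_S` between
vertices of `V` whose label `2⁻¹(b₁+b₂)` is again a vertex of `V`, and any two
vertices of `V` are joined by a path of edges of `E`. -/
def IsConnectedRSubgraph (p : ℕ) (S : Set (ZMod p)) (V : Set (ZMod p))
    (E : ZMod p → ZMod p → Prop) : Prop :=
  (∀ b ∈ V, ∃ a ∈ S, ∃ a' ∈ S, a + a' = b) ∧
  (∀ b₁ b₂, E b₁ b₂ → E b₂ b₁) ∧
  (∀ b₁ b₂, E b₁ b₂ →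
    b₁ ∈ V ∧ b₂ ∈ V ∧ RAdj p S b₁ b₂ ∧ (2 : ZMod p)⁻¹ * (b₁ + b₂) ∈ V) ∧
  (∀ b ∈ V, ∀ b' ∈ V, Relation.ReflTransGen E b b')

/-!
When `S` has at most three elements (so four distinct summands are unavailable), every edge of
`G_S` is either `2u — 2v` with label `u + v`, or `u + w — w + v` with label `2w`, where `w` is the
midpoint of `u ≠ v`. As `3` is invertible, such a `u + w` is never a double `2a` (`a ∈ S`), so
being a double is constant along edges, hence on a connected R-subgraph `V`. If `V` had two
vertices, some edge `b — c` would have its label `m ∈ V` on another edge `m — d`, with label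
`m' ∈ V`. Then `b — c` is `2u — 2v` with `m = u + v` a double, so `S = {u, m/2, v}` is an
arithmetic progression, and `m — d` is `2w — 2x` with `w = m/2`, `x ∈ {u, v}`: its label `w + x`
is not a double.
-/

theorem eq_or_eq_or_eq_of_encard_le_three {α : Type*} {S : Set α} (hS : S.encard ≤ 3)
    {x y z s : α} (hx : x ∈ S) (hy : y ∈ S) (hz : z ∈ S) (hxy : x ≠ y) (hxz : x ≠ z)
    (hyz : y ≠ z) (hs : s ∈ S) : s = x ∨ s = y ∨ s = z := by
  by_contra! h
  have hsub : ({s, x, y, z} : Set α) ⊆ S := by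
    simp only [Set.insert_subset_iff, Set.singleton_subset_iff]
    exact ⟨hs, hx, hy, hz⟩
  have hcard : ({s, x, y, z} : Set α).encard = 4 := by
    rw [Set.encard_insert_of_notMem (by simp [h.1, h.2.1, h.2.2]),
      Set.encard_insert_of_notMem (by simp [hxy, hxz]), Set.encard_pair hyz]
    rfl
  have := (Set.encard_le_encard hsub).trans hS
  rw [hcard] at this
  exact absurd this (by decide)

variable {p : ℕ} {S V : Set (ZMod p)} {E : ZMod p → ZMod p → Prop}

def doubles (S : Set (ZMod p)) : Set (ZMod p) := (fun a => a + a) '' S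

theorem add_notMem_doubles (hS : S.encard ≤ 3) (h3 : IsUnit (3 : ZMod p)) {u w v : ZMod p}
    (hu : u ∈ S) (hw : w ∈ S) (hv : v ∈ S) (huv : u ≠ v) (hmid : u + v = w + w) :
    u + w ∉ doubles S := by
  have huw : u ≠ w := by rintro rfl; exact huv (add_left_cancel hmid).symm
  have hwv : w ≠ v := by rintro rfl; exact huv (add_right_cancel hmid)
  rintro ⟨s, hs, hss : s + s = u + w⟩
  rcases eq_or_eq_or_eq_of_encard_le_three hS hu hw hv huw huv hwv hs with rfl | rfl | rfl
  · exact huw (add_left_cancel hss)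
  · exact huw (add_right_cancel hss).symm
  · have : 3 * (w - s) = 0 := by linear_combination -hss - hmid
    exact hwv (sub_eq_zero.mp (h3.mul_right_eq_zero.mp this))

theorem add_notMem_doubles_of_ne (hS : S.encard ≤ 3) (h3 : IsUnit (3 : ZMod p))
    {u w v x : ZMod p} (hu : u ∈ S) (hw : w ∈ S) (hv : v ∈ S) (hx : x ∈ S) (huv : u ≠ v)
    (hmid : u + v = w + w) (hxw : x ≠ w) : w + x ∉ doubles S := by
  have huw : u ≠ w := by rintro rfl; exact huv (add_left_cancel hmid).symm
  have hwv : w ≠ v := by rintro rfl; exact huv (add_right_cancel hmid)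
  rcases eq_or_eq_or_eq_of_encard_le_three hS hu hw hv huw huv hwv hx with rfl | rfl | rfl
  · rw [add_comm]; exact add_notMem_doubles hS h3 hu hw hv huv hmid
  · exact (hxw rfl).elim
  · rw [add_comm]; exact add_notMem_doubles hS h3 hv hw hu huv.symm (by rwa [add_comm])

theorem inv_two_mul_add_eq (h2 : IsUnit (2 : ZMod p)) {b₁ b₂ m : ZMod p}
    (h : b₁ + b₂ = m + m) : (2 : ZMod p)⁻¹ * (b₁ + b₂) = m := by
  rw [h, ← two_mul, ← mul_assoc, ZMod.inv_mul_of_unit _ h2, one_mul]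

theorem RAdj.exists_add_eq_add {b₁ b₂ : ZMod p} (h : RAdj p S b₁ b₂) :
    ∃ a₁ ∈ S, ∃ a₂ ∈ S, ∃ a₃ ∈ S, ∃ a₄ ∈ S,
      a₁ + a₂ = b₁ ∧ a₃ + a₄ = b₂ ∧ a₁ + a₃ = a₂ + a₄ := by
  obtain ⟨-, a₁, h₁, a₂, h₂, a₃, h₃, a₄, h₄, e₁, e₂, e | e⟩ := h
  · exact ⟨a₁, h₁, a₂, h₂, a₃, h₃, a₄, h₄, e₁, e₂, e⟩
  · exact ⟨a₁, h₁, a₂, h₂, a₄, h₄, a₃, h₃, e₁, by rwa [add_comm], e⟩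

theorem RAdj.cases_of_encard_le_three (hS : S.encard ≤ 3) (h2 : IsUnit (2 : ZMod p))
    {b₁ b₂ : ZMod p} (h : RAdj p S b₁ b₂) :
    (∃ u ∈ S, ∃ v ∈ S, u + u = b₁ ∧ v + v = b₂ ∧ (2 : ZMod p)⁻¹ * (b₁ + b₂) = u + v) ∨
    (∃ u ∈ S, ∃ w ∈ S, ∃ v ∈ S, u ≠ v ∧ u + v = w + w ∧ u + w = b₁ ∧ w + v = b₂ ∧
      (2 : ZMod p)⁻¹ * (b₁ + b₂) = w + w) := by
  have hne := h.1
  obtain ⟨a₁, h₁, a₂, h₂, a₃, h₃, a₄, h₄, rfl, rfl, e⟩ := h.exists_add_eq_add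
  have h14 : a₁ ≠ a₄ := by
    rintro rfl; exact hne (by linear_combination -e)
  have h23 : a₂ ≠ a₃ := by
    rintro rfl; exact hne e
  by_cases h12 : a₁ = a₂
  · subst h12
    refine Or.inl ⟨a₁, h₁, a₃, h₃, rfl, ?_, inv_two_mul_add_eq h2 (by linear_combination -e)⟩
    rw [add_left_cancel e]
  by_cases h13 : a₁ = a₃
  · subst h13
    refine Or.inr ⟨a₂, h₂, a₁, h₁, a₄, h₄, ?_, e.symm, add_comm _ _, rfl,
      inv_two_mul_add_eq h2 (by linear_combination -e)⟩
    rintro rfl; exact hne rfl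
  by_cases h24 : a₂ = a₄
  · subst h24
    exact Or.inr ⟨a₁, h₁, a₂, h₂, a₃, h₃, h13, e, rfl, add_comm _ _,
      inv_two_mul_add_eq h2 (by linear_combination e)⟩
  rcases eq_or_eq_or_eq_of_encard_le_three hS h₁ h₂ h₃ h12 h13 h23 h₄ with h | h | h
  · exact absurd h.symm h14
  · exact absurd h.symm h24
  · subst h; exact absurd (add_right_cancel e) h12

theorem RAdj.mem_doubles_iff (hS : S.encard ≤ 3) (h2 : IsUnit (2 : ZMod p))
    (h3 : IsUnit (3 : ZMod p)) {b₁ b₂ : ZMod p} (h : RAdj p S b₁ b₂) :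
    b₁ ∈ doubles S ↔ b₂ ∈ doubles S := by
  rcases h.cases_of_encard_le_three hS h2 with
    ⟨u, hu, v, hv, rfl, rfl, -⟩ | ⟨u, hu, w, hw, v, hv, huv, hmid, rfl, rfl, -⟩
  · exact iff_of_true ⟨u, hu, rfl⟩ ⟨v, hv, rfl⟩
  · refine iff_of_false (add_notMem_doubles hS h3 hu hw hv huv hmid) ?_
    rw [add_comm]
    exact add_notMem_doubles hS h3 hv hw hu huv.symm (by rwa [add_comm])

namespace IsConnectedRSubgraph

theorem iff_of_forall_rAdj (hG : IsConnectedRSubgraph p S V E) {P : ZMod p → Prop}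
    (hP : ∀ b₁ b₂, RAdj p S b₁ b₂ → (P b₁ ↔ P b₂)) {b b' : ZMod p} (hb : b ∈ V)
    (hb' : b' ∈ V) : P b ↔ P b' := by
  have hbb' := hG.2.2.2 b hb b' hb'
  clear hb'
  induction hbb' with
  | refl => rfl
  | tail _ hcd ih => exact ih.trans (hP _ _ (hG.2.2.1 _ _ hcd).2.2.1)

theorem exists_edge (hG : IsConnectedRSubgraph p S V E) {b b' : ZMod p} (hb : b ∈ V)
    (hb' : b' ∈ V) (hne : b ≠ b') : ∃ c, E b c := by
  rcases (hG.2.2.2 b hb b' hb').cases_head with h | ⟨c, hc, -⟩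
  · exact absurd h hne
  · exact ⟨c, hc⟩

theorem subsingleton (hS : S.encard ≤ 3) (h2 : IsUnit (2 : ZMod p)) (h3 : IsUnit (3 : ZMod p))
    (hG : IsConnectedRSubgraph p S V E) : V.Subsingleton := by
  intro b hb b' hb'
  by_contra hne
  have hD {c c' : ZMod p} (hc : c ∈ V) (hc' : c' ∈ V) : c ∈ doubles S ↔ c' ∈ doubles S :=
    hG.iff_of_forall_rAdj (fun _ _ h => h.mem_doubles_iff hS h2 h3) hc hc'
  obtain ⟨c, hbc⟩ := hG.exists_edge hb hb' hne
  obtain ⟨-, -, hadj, hm⟩ := hG.2.2.1 _ _ hbc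
  obtain ⟨d, hmd⟩ : ∃ d, E ((2 : ZMod p)⁻¹ * (b + c)) d := by
    by_cases hmb : (2 : ZMod p)⁻¹ * (b + c) = b
    · exact hG.exists_edge hm hb' (by rwa [hmb])
    · exact hG.exists_edge hm hb hmb
  obtain ⟨-, -, hadj', hm'⟩ := hG.2.2.1 _ _ hmd
  rcases hadj.cases_of_encard_le_three hS h2 with
    ⟨u, hu, v, hv, rfl, rfl, hmuv⟩ | ⟨u, hu, w, hw, v, hv, huv, hmid, rfl, -, hmw⟩
  · have huv : u ≠ v := by rintro rfl; exact hadj.1 rfl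
    have hmD := (hD hb hm).mp ⟨u, hu, rfl⟩
    rw [hmuv] at hm hadj' hm' hmD
    rcases hadj'.cases_of_encard_le_three hS h2 with
      ⟨w, hw, x, hx, hwm, rfl, hm'wx⟩ | ⟨u', hu', w', hw', v', hv', huv', hmid', hum, -, -⟩
    · have hxw : x ≠ w := by rintro rfl; exact hadj'.1 hwm.symm
      refine add_notMem_doubles_of_ne hS h3 hu hw hv hx huv hwm.symm hxw ?_
      rw [← hm'wx]
      exact (hD hm hm').mp hmD
    · exact add_notMem_doubles hS h3 hu' hw' hv' huv' hmid' (hum ▸ hmD)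
  · rw [hmw] at hm
    exact add_notMem_doubles hS h3 hu hw hv huv hmid ((hD hm hb).mp ⟨w, hw, rfl⟩)

end IsConnectedRSubgraph

theorem stmt14 (S : Set (ZMod 7)) (hS : S.ncard ≤ 3) :
    ¬ ∃ (V : Set (ZMod 7)) (E : ZMod 7 → ZMod 7 → Prop),
      IsConnectedRSubgraph 7 S V E ∧ 3 ≤ V.ncard := by
  rintro ⟨V, E, hG, hV⟩
  have hS' : S.encard ≤ 3 := by
    rw [← S.toFinite.cast_ncard_eq]
    exact_mod_cast hS
  have := Set.ncard_le_one_iff_subsingleton.mpr (hG.subsingleton hS' (by decide) (by decide))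
  omega
end

section
/- Let k ≥ 1 and let M = (w₁, …, w_k) be a k×k integer matrix (columns wⱼ) satisfying the row condition (⋆) that every row's multiset of nonzero entries is one of {-2},{-1},{1},{2},{-2,1},{-2,2},{-1,-1},{-1,1},{-1,2},{1,1},{-2,1,1},{-1,-1,1},{-1,-1,2},{-1,1,1},{-1,-1,1,1}. Then the matrix obtained from M by replacing the j-th column wⱼ with -(w₁ + ⋯ + w_k) also satisfies condition (⋆). -/
/-!
The nonzero entries of the new row are those of the old row, with the replaced entry removed and
minus the row sum added (when nonzero). The row sum is the sum of the nonzero entries, so the new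
multiset depends only on the old multiset and the replaced entry, and the claim becomes a finite
check over the fifteen multisets, settled by `decide`.
-/

/-- Condition (⋆): the multiset of nonzero entries of each row is one of the
fifteen listed multisets. -/
def StarCond (k : ℕ) (M : Matrix (Fin k) (Fin k) ℤ) : Prop :=
  ∀ i, Multiset.filter (· ≠ 0) (Finset.univ.val.map (M i)) ∈
    ([{-2}, {-1}, {1}, {2}, {-2, 1}, {-2, 2}, {-1, -1}, {-1, 1}, {-1, 2}, {1, 1},
      {-2, 1, 1}, {-1, -1, 1}, {-1, -1, 2}, {-1, 1, 1}, {-1, -1, 1, 1}] : List (Multiset ℤ))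

theorem Multiset.sum_filter_ne_zero {R : Type*} [AddCommMonoid R] [DecidableEq R]
    (m : Multiset R) : (m.filter (· ≠ 0)).sum = m.sum := by
  have hzero : (m.filter (¬ · ≠ 0)).sum = 0 :=
    sum_eq_zero fun x hx => not_not.1 (mem_filter.1 hx).2
  calc (m.filter (· ≠ 0)).sum = (m.filter (· ≠ 0)).sum + (m.filter (¬ · ≠ 0)).sum := by
        rw [hzero, add_zero]
    _ = m.sum := sum_filter_add_sum_filter_not _

section NonzeroEntries

variable {ι R : Type*} [Fintype ι] [Zero R] [DecidableEq R]

theorem mem_cons_zero_filter_ne_zero_map_univ (f : ι → R) (j : ι) :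
    f j ∈ 0 ::ₘ (Finset.univ.val.map f).filter (· ≠ 0) := by
  by_cases h : f j = 0
  · exact h ▸ Multiset.mem_cons_self _ _
  · exact Multiset.mem_cons_of_mem
      (Multiset.mem_filter.2 ⟨Multiset.mem_map_of_mem f (Finset.mem_univ j), h⟩)

theorem filter_ne_zero_map_univ_update [DecidableEq ι] (f : ι → R) (j : ι) (c : R) :
    (Finset.univ.val.map (Function.update f j c)).filter (· ≠ 0) =
      (c ::ₘ ((Finset.univ.val.map f).filter (· ≠ 0)).erase (f j)).filter (· ≠ 0) := by
  obtain ⟨rest, hrest⟩ : ∃ rest, (Finset.univ : Finset ι).val = j ::ₘ rest :=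
    ⟨_, (Multiset.cons_erase (Finset.mem_univ j)).symm⟩
  have hj : j ∉ rest := (Multiset.nodup_cons.1 (hrest ▸ Finset.univ.nodup)).1
  have hmap : rest.map (Function.update f j c) = rest.map f :=
    Multiset.map_congr rfl fun x hx => Function.update_of_ne (ne_of_mem_of_not_mem hx hj) _ _
  have herase :
      ((f j ::ₘ rest.map f).filter (· ≠ 0)).erase (f j) = (rest.map f).filter (· ≠ 0) := by
    rw [Multiset.filter_cons]
    split_ifs with hfj
    · exact Multiset.erase_cons_head _ _
    · rw [zero_add]
      exact Multiset.erase_of_notMem fun h => (Multiset.mem_filter.1 h).2 (not_not.1 hfj)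
  rw [hrest, Multiset.map_cons, Multiset.map_cons, hmap, Function.update_self, herase,
    Multiset.filter_cons, Multiset.filter_cons, Multiset.filter_filter]
  simp only [and_self]

end NonzeroEntries

def starMultisets : List (Multiset ℤ) :=
  [{-2}, {-1}, {1}, {2}, {-2, 1}, {-2, 2}, {-1, -1}, {-1, 1}, {-1, 2}, {1, 1},
    {-2, 1, 1}, {-1, -1, 1}, {-1, -1, 2}, {-1, 1, 1}, {-1, -1, 1, 1}]

theorem starCond_iff {k : ℕ} {M : Matrix (Fin k) (Fin k) ℤ} :
    StarCond k M ↔ ∀ i, (Finset.univ.val.map (M i)).filter (· ≠ 0) ∈ starMultisets :=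
  Iff.rfl

-- `x = 0` is the case that the replaced entry is zero.
theorem filter_ne_zero_neg_sum_cons_erase_mem_starMultisets :
    ∀ A ∈ starMultisets, ∀ x ∈ 0 ::ₘ A,
      ((-A.sum) ::ₘ A.erase x).filter (· ≠ 0) ∈ starMultisets := by
  decide

theorem stmt17_general (k : ℕ) (M : Matrix (Fin k) (Fin k) ℤ)
    (h : StarCond k M) (j : Fin k) :
    StarCond k (fun i j' => if j' = j then -(∑ l, M i l) else M i j') := by
  refine starCond_iff.2 fun i => ?_
  have hrow : (fun j' => if j' = j then -(∑ l, M i l) else M i j') =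
      Function.update (M i) j (-(∑ l, M i l)) := by
    ext j'
    rw [Function.update_apply]
  have hsum : ∑ l, M i l = ((Finset.univ.val.map (M i)).filter (· ≠ 0)).sum :=
    (Multiset.sum_filter_ne_zero _).symm
  rw [hrow, filter_ne_zero_map_univ_update, hsum]
  exact filter_ne_zero_neg_sum_cons_erase_mem_starMultisets _ (starCond_iff.1 h i) _
    (mem_cons_zero_filter_ne_zero_map_univ _ j)

theorem stmt17 (k : ℕ) (hk : 1 ≤ k) (M : Matrix (Fin k) (Fin k) ℤ)
    (h : StarCond k M) (j : Fin k) :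
    StarCond k (fun i j' => if j' = j then -(∑ l, M i l) else M i j') :=
  stmt17_general k M h j
end
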